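/- Let Λ be a k-graph with a pseudo free self-similar action of a group G. Then the set A := {x ∈ Λ^∞ : for all g ∈ G and p, q ∈ ℕ^k, σ^p(x) = g·σ^q(x) implies g = 1_G and p = q} is dense in Λ^∞ (in the cylinder-set topology) if and only if Λ is G-aperiodic. (Equivalently: the self-similar path groupoid G_{G,Λ} is topologically principal if and only if Λ is G-aperiodic.) -/

import Mathlib

namespace SSKG

/-- `ℕ^k`. -/
abbrev NK (k : ℕ) := Fin k → ℕ
/-- `ℤ^k`. -/
abbrev ZK (k : ℕ) := Fin k → ℤ

lemma le0 {k : ℕ} (p : NK k) : 0 ≤ p := Pi.le_def.mpr fun i => Nat.zero_le (p i)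

/-- A (row-finite, source-free, countable) `k`-graph: a countable small category with a
degree functor `d` into `ℕ^k` satisfying the unique factorization property. -/
structure KGraph (k : ℕ) where
  Obj : Type
  Mor : Type
  countable_mor : Countable Mor
  r : Mor → Obj
  s : Mor → Obj
  d : Mor → NK k
  ofObj : Obj → Mor
  comp : (μ ν : Mor) → s μ = r ν → Mor
  r_ofObj : ∀ v, r (ofObj v) = v
  s_ofObj : ∀ v, s (ofObj v) = v
  d_ofObj : ∀ v, d (ofObj v) = 0
  eq_ofObj_of_d_eq_zero : ∀ μ, d μ = 0 → ∃ v, μ = ofObj v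
  r_comp : ∀ μ ν h, r (comp μ ν h) = r μ
  s_comp : ∀ μ ν h, s (comp μ ν h) = s ν
  d_comp : ∀ μ ν h, d (comp μ ν h) = d μ + d ν
  comp_ofObj : ∀ μ (h : s μ = r (ofObj (s μ))), comp μ (ofObj (s μ)) h = μ
  ofObj_comp : ∀ μ (h : s (ofObj (r μ)) = r μ), comp (ofObj (r μ)) μ h = μ
  comp_assoc : ∀ μ ν ρ (h₁ : s μ = r ν) (h₂ : s ν = r ρ),
      comp (comp μ ν h₁) ρ ((s_comp μ ν h₁).trans h₂)
        = comp μ (comp ν ρ h₂) (h₁.trans (r_comp ν ρ h₂).symm)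
  factor_exists : ∀ μ (n m : NK k), d μ = n + m →
      ∃ (α β : Mor) (h : s α = r β), d α = n ∧ d β = m ∧ comp α β h = μ
  factor_unique : ∀ (α β α' β' : Mor) (h : s α = r β) (h' : s α' = r β'),
      d α = d α' → comp α β h = comp α' β' h' → α = α' ∧ β = β'
  row_finite : ∀ (v : Obj) (n : NK k), {μ : Mor | r μ = v ∧ d μ = n}.Finite
  no_sources : ∀ (v : Obj) (n : NK k), ∃ μ : Mor, r μ = v ∧ d μ = n

lemma KGraph.comp_congr {k : ℕ} (Λ : KGraph k) {μ ν ν' : Λ.Mor} (hν : ν = ν')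
    (h : Λ.s μ = Λ.r ν) (h' : Λ.s μ = Λ.r ν') : Λ.comp μ ν h = Λ.comp μ ν' h' := by
  cases hν; rfl

/-- An edge: a morphism of degree `e_i` for some `i`. -/
def IsEdge {k : ℕ} (Λ : KGraph k) (μ : Λ.Mor) : Prop := ∃ i : Fin k, Λ.d μ = Pi.single i 1

/-- Membership in `Λ⁰ ∪ Λᵉ` (a vertex or an edge). -/
def VorE {k : ℕ} (Λ : KGraph k) (μ : Λ.Mor) : Prop := Λ.d μ = 0 ∨ IsEdge Λ μ

/-- A self-similar action of a group `G` on a `k`-graph `Λ`: an action by degree-,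
range- and source-preserving automorphisms, together with a restriction map
`(g, μ) ↦ g|_μ` satisfying the Exel–Pardo style axioms. -/
structure SelfSimilar (k : ℕ) (G : Type) [Group G] (Λ : KGraph k) where
  act : G → Λ.Mor → Λ.Mor
  res : G → Λ.Mor → G
  act_one : ∀ μ, act 1 μ = μ
  act_mul : ∀ g h μ, act (g * h) μ = act g (act h μ)
  act_d : ∀ g μ, Λ.d (act g μ) = Λ.d μ
  act_ofObj_r : ∀ g μ, act g (Λ.ofObj (Λ.r μ)) = Λ.ofObj (Λ.r (act g μ))
  act_ofObj_s : ∀ g μ, act g (Λ.ofObj (Λ.s μ)) = Λ.ofObj (Λ.s (act g μ))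
  compat : ∀ g μ ν (h : Λ.s μ = Λ.r ν), Λ.s (act g μ) = Λ.r (act (res g μ) ν)
  act_comp : ∀ g μ ν (h : Λ.s μ = Λ.r ν),
      act g (Λ.comp μ ν h) = Λ.comp (act g μ) (act (res g μ) ν) (compat g μ ν h)
  res_ofObj : ∀ g v, res g (Λ.ofObj v) = g
  res_comp : ∀ g μ ν (h : Λ.s μ = Λ.r ν), res g (Λ.comp μ ν h) = res (res g μ) ν
  res_one : ∀ μ, res 1 μ = 1
  res_mul : ∀ g h μ, res (g * h) μ = res g (act h μ) * res h μ

variable {k : ℕ} {G : Type} [Group G] {Λ : KGraph k}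

/-- The induced action of `G` on the vertices `Λ⁰`. -/
def SelfSimilar.actV (S : SelfSimilar k G Λ) (g : G) (v : Λ.Obj) : Λ.Obj :=
  Λ.s (S.act g (Λ.ofObj v))

/-- The action is pseudo free. -/
def SelfSimilar.PseudoFree (S : SelfSimilar k G Λ) : Prop :=
  ∀ (g : G) (μ : Λ.Mor), S.act g μ = μ → S.res g μ = 1 → g = 1

/-- An infinite path in `Λ`: a degree-preserving functor `Ω_k → Λ`, recorded through
its segments `x(p,q)` for `p ≤ q`. -/
structure InfPath {k : ℕ} (Λ : KGraph k) where
  seg : ∀ p q : NK k, p ≤ q → Λ.Mor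
  d_seg : ∀ p q (h : p ≤ q), Λ.d (seg p q h) = fun i => q i - p i
  src_seg : ∀ p q m (h₁ : p ≤ q) (h₂ : q ≤ m), Λ.s (seg p q h₁) = Λ.r (seg q m h₂)
  comp_seg : ∀ p q m (h₁ : p ≤ q) (h₂ : q ≤ m),
      Λ.comp (seg p q h₁) (seg q m h₂) (src_seg p q m h₁ h₂) = seg p m (h₁.trans h₂)

lemma InfPath.ext' {x y : InfPath Λ} (h : x.seg = y.seg) : x = y := by
  cases x; cases y; cases h; rfl

/-- The shift `σ^p(x)`. -/
def InfPath.shift (x : InfPath Λ) (p : NK k) : InfPath Λ where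
  seg m n h := x.seg (m + p) (n + p) (add_le_add_left h p)
  d_seg m n h := by
    rw [x.d_seg]; funext i; simp only [Pi.add_apply]; omega
  src_seg m n l h₁ h₂ := x.src_seg _ _ _ _ _
  comp_seg m n l h₁ h₂ := x.comp_seg _ _ _ _ _

/-- The action of `G` on infinite paths: `(g·x)(p,q) = g|_{x(0,p)} · x(p,q)`. -/
def SelfSimilar.actInf (S : SelfSimilar k G Λ) (g : G) (x : InfPath Λ) : InfPath Λ where
  seg p q h := S.act (S.res g (x.seg 0 p (le0 p))) (x.seg p q h)
  d_seg p q h := by rw [S.act_d, x.d_seg]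
  src_seg p q m h₁ h₂ := by
    have key : S.res g (x.seg 0 q (le0 q))
        = S.res (S.res g (x.seg 0 p (le0 p))) (x.seg p q h₁) := by
      rw [← S.res_comp g (x.seg 0 p (le0 p)) (x.seg p q h₁) (x.src_seg 0 p q (le0 p) h₁),
        x.comp_seg 0 p q (le0 p) h₁]
    beta_reduce
    rw [key]
    exact S.compat _ _ _ (x.src_seg p q m h₁ h₂)
  comp_seg p q m h₁ h₂ := by
    have key : S.res g (x.seg 0 q (le0 q))
        = S.res (S.res g (x.seg 0 p (le0 p))) (x.seg p q h₁) := by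
      rw [← S.res_comp g (x.seg 0 p (le0 p)) (x.seg p q h₁) (x.src_seg 0 p q (le0 p) h₁),
        x.comp_seg 0 p q (le0 p) h₁]
    beta_reduce
    rw [← x.comp_seg p q m h₁ h₂, S.act_comp]
    exact Λ.comp_congr (by rw [key]) _ _

/-- The restriction cocycle `g|_x : ℕ^k → G`, `g|_x(p) = g|_{x(0,p)}`. -/
def SelfSimilar.resInf (S : SelfSimilar k G Λ) (g : G) (x : InfPath Λ) : NK k → G :=
  fun p => S.res g (x.seg 0 p (le0 p))

/-- `IsConcat μ x y` says that `y = μx`, the concatenation of the finite path `μ`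
(with `x(0,0) = s(μ)`) and the infinite path `x`. -/
def IsConcat (Λ : KGraph k) (μ : Λ.Mor) (x y : InfPath Λ) : Prop :=
  x.seg 0 0 le_rfl = Λ.ofObj (Λ.s μ) ∧
  y.seg 0 (Λ.d μ) (le0 _) = μ ∧
  ∀ m n (h : m ≤ n), y.seg (Λ.d μ + m) (Λ.d μ + n) (add_le_add_right h _) = x.seg m n h

/-- The cylinder set `Z(μ)`. -/
def cylinder (Λ : KGraph k) (μ : Λ.Mor) : Set (InfPath Λ) :=
  {x : InfPath Λ | x.seg 0 (Λ.d μ) (le0 _) = μ}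

/-- The cylinder-set topology on `Λ^∞`. -/
instance instTopInfPath (Λ : KGraph k) : TopologicalSpace (InfPath Λ) :=
  TopologicalSpace.generateFrom {U | ∃ μ : Λ.Mor, U = cylinder Λ μ}

/-- `Λ` is `G`-cofinal. -/
def GCofinal (S : SelfSimilar k G Λ) : Prop :=
  ∀ (x : InfPath Λ) (v : Λ.Obj), ∃ (p : NK k) (μ : Λ.Mor) (g : G),
    Λ.ofObj (Λ.s μ) = x.seg p p le_rfl ∧ Λ.r μ = S.actV g v

/-- `Λ` is `G`-aperiodic. -/
def GAperiodic (S : SelfSimilar k G Λ) : Prop :=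
  ∀ v : Λ.Obj, ∃ x : InfPath Λ, x.seg 0 0 le_rfl = Λ.ofObj v ∧
    ∀ (g : G) (p q : NK k), g ≠ 1 ∨ p ≠ q → x.shift p ≠ S.actInf g (x.shift q)

/-- A subset `U ⊆ Λ^∞` is invariant for the self-similar action. -/
def InvariantSet (S : SelfSimilar k G Λ) (U : Set (InfPath Λ)) : Prop :=
  ∀ (g : G) (μ ν : Λ.Mor) (x z y : InfPath Λ),
    Λ.s μ = S.actV g (Λ.s ν) → IsConcat Λ ν x z → IsConcat Λ μ (S.actInf g x) y →
    z ∈ U → y ∈ U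

/-- The minimal common extensions `Λ^min(μ,ν)`. -/
def Lmin (Λ : KGraph k) (μ ν : Λ.Mor) : Set (Λ.Mor × Λ.Mor) :=
  {p | ∃ (h₁ : Λ.s μ = Λ.r p.1) (h₂ : Λ.s ν = Λ.r p.2),
      Λ.comp μ p.1 h₁ = Λ.comp ν p.2 h₂ ∧ Λ.d (Λ.comp μ p.1 h₁) = Λ.d μ ⊔ Λ.d ν}

/-- The group `C(ℕ^k, G)` of all functions `ℕ^k → G` under pointwise multiplication. -/
abbrev CkG (k : ℕ) (G : Type) [Group G] := NK k → G

/-- The normal subgroup of eventually trivial functions. -/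
def tailTrivial (k : ℕ) (G : Type) [Group G] : Subgroup (CkG k G) where
  carrier := {f | ∃ z : NK k, ∀ p, z ≤ p → f p = 1}
  one_mem' := ⟨0, fun _ _ => rfl⟩
  mul_mem' := by
    rintro f g ⟨z₁, h₁⟩ ⟨z₂, h₂⟩
    exact ⟨z₁ ⊔ z₂, fun p hp => by
      rw [Pi.mul_apply, h₁ p (le_trans le_sup_left hp), h₂ p (le_trans le_sup_right hp),
        one_mul]⟩
  inv_mem' := by
    rintro f ⟨z, h⟩
    exact ⟨z, fun p hp => by rw [Pi.inv_apply, h p hp, inv_one]⟩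

instance tailTrivialNormal (k : ℕ) (G : Type) [Group G] : (tailTrivial k G).Normal := by
  constructor
  rintro f ⟨z, hz⟩ g
  exact ⟨z, fun p hp => by
    simp only [Pi.mul_apply, Pi.inv_apply, hz p hp, mul_one, mul_inv_cancel]⟩

/-- The quotient group `Q(ℕ^k, G) = C(ℕ^k,G)/∼`. -/
abbrev QkG (k : ℕ) (G : Type) [Group G] := CkG k G ⧸ tailTrivial k G

/-- Coercion `ℕ^k → ℤ^k`. -/
def toZ {k : ℕ} (p : NK k) : ZK k := fun i => (p i : ℤ)

open scoped Classical in
/-- The translation `T_z` on functions `ℕ^k → G`, for `z ∈ ℤ^k`. -/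
noncomputable def transFun {k : ℕ} {G : Type} [Group G] (z : ZK k) (f : CkG k G) : CkG k G :=
  fun p => if (∀ i, z i ≤ (p i : ℤ)) then f (fun i => ((p i : ℤ) - z i).toNat) else 1

/-- The ambient space `Λ^∞ × (Q(ℕ^k,G) ⋊ ℤ^k) × Λ^∞` containing the self-similar
path groupoid (as a set). -/
abbrev Triple (k : ℕ) (G : Type) [Group G] (Λ : KGraph k) :=
  InfPath Λ × (QkG k G × ZK k) × InfPath Λ

/-- The basic set `Z(μ, g, ν)` of the self-similar path groupoid. -/
def Zset (S : SelfSimilar k G Λ) (μ : Λ.Mor) (g : G) (ν : Λ.Mor) : Set (Triple k G Λ) :=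
  {t | ∃ x y z : InfPath Λ, IsConcat Λ ν x z ∧ IsConcat Λ μ (S.actInf g x) y ∧
    t = (y, ((QuotientGroup.mk (transFun (toZ (Λ.d μ)) (S.resInf g x)) : QkG k G),
      toZ (Λ.d μ) - toZ (Λ.d ν)), z)}

/-- The family `B_{G,Λ}` of basic sets. -/
def BGL (S : SelfSimilar k G Λ) : Set (Set (Triple k G Λ)) :=
  {A | ∃ (μ ν : Λ.Mor) (g : G), Λ.s μ = S.actV g (Λ.s ν) ∧ A = Zset S μ g ν}

/-- The self-similar path groupoid `G_{G,Λ}` (as a set of triples). -/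
def Gpd (S : SelfSimilar k G Λ) : Set (Triple k G Λ) :=
  {t | ∃ (g : G) (μ ν : Λ.Mor), Λ.s μ = S.actV g (Λ.s ν) ∧ t ∈ Zset S μ g ν}

/-- The topology on `G_{G,Λ}` generated by the basic sets. -/
def gpdTop (S : SelfSimilar k G Λ) : TopologicalSpace {t : Triple k G Λ // t ∈ Gpd S} :=
  TopologicalSpace.generateFrom
    {A | ∃ (μ ν : Λ.Mor) (g : G), A = {t | (t : Triple k G Λ) ∈ Zset S μ g ν}}

/-!
Cylinder sets form a basis of `Λ^∞`. If the aperiodic paths are dense, one of them lies in `Z(v)`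
and witnesses `G`-aperiodicity at `v`. Conversely, given a cylinder `Z(μ)`, prepend `μ` to an
aperiodic path `y` at `s(μ)`. Shifting a relation `σ^p(μy) = g·σ^q(μy)` by `d(μ)`
gives `σ^p(y) = g|_α · σ^q(y)` with `α = σ^q(μy)(0, d(μ))`, so `p = q` and `g|_α = 1`; then
`g·α = α`, and pseudo freeness forces `g = 1`. The infinite paths needed (one at each vertex, and
`μy`) are obtained from coherent families of initial segments.
-/

lemma KGraph.comp_congr_left (Λ : KGraph k) {μ μ' ν : Λ.Mor} (hμ : μ = μ')
    (h : Λ.s μ = Λ.r ν) (h' : Λ.s μ' = Λ.r ν) : Λ.comp μ ν h = Λ.comp μ' ν h' := by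
  cases hμ; rfl

def KGraph.IsPrefix (Λ : KGraph k) (μ ν : Λ.Mor) : Prop :=
  ∃ (γ : Λ.Mor) (h : Λ.s μ = Λ.r γ), Λ.comp μ γ h = ν

lemma KGraph.isPrefix_refl (Λ : KGraph k) (μ : Λ.Mor) : Λ.IsPrefix μ μ :=
  ⟨Λ.ofObj (Λ.s μ), (Λ.r_ofObj _).symm, Λ.comp_ofObj μ _⟩

lemma KGraph.isPrefix_comp (Λ : KGraph k) (μ ν : Λ.Mor) (h : Λ.s μ = Λ.r ν) :
    Λ.IsPrefix μ (Λ.comp μ ν h) :=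
  ⟨ν, h, rfl⟩

lemma KGraph.IsPrefix.trans {μ ν ρ : Λ.Mor} (h₁ : Λ.IsPrefix μ ν) (h₂ : Λ.IsPrefix ν ρ) :
    Λ.IsPrefix μ ρ := by
  obtain ⟨γ, hγ, rfl⟩ := h₁
  obtain ⟨δ, hδ, rfl⟩ := h₂
  have hγδ : Λ.s γ = Λ.r δ := (Λ.s_comp μ γ hγ).symm.trans hδ
  exact ⟨Λ.comp γ δ hγδ, hγ.trans (Λ.r_comp γ δ hγδ).symm, (Λ.comp_assoc μ γ δ hγ hγδ).symm⟩

lemma KGraph.IsPrefix.comp_left {μ α β : Λ.Mor} (h : Λ.IsPrefix α β) (hα : Λ.s μ = Λ.r α)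
    (hβ : Λ.s μ = Λ.r β) : Λ.IsPrefix (Λ.comp μ α hα) (Λ.comp μ β hβ) := by
  obtain ⟨γ, hγ, rfl⟩ := h
  exact ⟨γ, (Λ.s_comp μ α hα).trans hγ, Λ.comp_assoc μ α γ hα hγ⟩

lemma KGraph.IsPrefix.eq_of_d_eq {α α' ν : Λ.Mor} (h : Λ.IsPrefix α ν) (h' : Λ.IsPrefix α' ν)
    (hd : Λ.d α = Λ.d α') : α = α' := by
  obtain ⟨γ, hγ, rfl⟩ := h
  obtain ⟨γ', hγ', e⟩ := h'
  exact (Λ.factor_unique α γ α' γ' hγ hγ' hd e.symm).1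

lemma KGraph.exists_isPrefix_d_eq {ν : Λ.Mor} {p : NK k} (hp : p ≤ Λ.d ν) :
    ∃ α, Λ.d α = p ∧ Λ.IsPrefix α ν := by
  obtain ⟨α, β, h, hα, -, hαβ⟩ :=
    Λ.factor_exists ν p (Λ.d ν - p) (add_tsub_cancel_of_le hp).symm
  exact ⟨α, hα, β, h, hαβ⟩

lemma InfPath.seg_congr (x : InfPath Λ) {p q p' q' : NK k} (hp : p = p') (hq : q = q')
    (h : p ≤ q) (h' : p' ≤ q') : x.seg p q h = x.seg p' q' h' := by
  subst hp hq; rfl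

lemma InfPath.d_seg_zero (x : InfPath Λ) (q : NK k) : Λ.d (x.seg 0 q (le0 q)) = q := by
  rw [x.d_seg]; funext i; simp

lemma InfPath.isPrefix_seg_zero (x : InfPath Λ) {p q : NK k} (h : p ≤ q) :
    Λ.IsPrefix (x.seg 0 p (le0 p)) (x.seg 0 q (le0 q)) :=
  ⟨x.seg p q h, x.src_seg 0 p q _ h, x.comp_seg 0 p q _ h⟩

lemma InfPath.seg_eq_of_seg_zero_eq_comp (x : InfPath Λ) {p q : NK k} (h : p ≤ q)
    {α β : Λ.Mor} (hαβ : Λ.s α = Λ.r β) (hp : x.seg 0 p (le0 p) = α)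
    (hq : x.seg 0 q (le0 q) = Λ.comp α β hαβ) : x.seg p q h = β :=
  (Λ.factor_unique _ _ α β (x.src_seg 0 p q _ h) hαβ (congrArg Λ.d hp)
    ((x.comp_seg 0 p q _ h).trans hq)).2

lemma InfPath.exists_seg_zero_eq (a : NK k → Λ.Mor) (hd : ∀ q, Λ.d (a q) = q)
    (ha : ∀ p q, p ≤ q → Λ.IsPrefix (a p) (a q)) :
    ∃ x : InfPath Λ, ∀ q, x.seg 0 q (le0 q) = a q := by
  choose b hb hab using ha
  have hs : ∀ p q (h : p ≤ q), Λ.s (b p q h) = Λ.s (a q) := fun p q h => by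
    rw [← hab p q h, Λ.s_comp]
  have hcancel : ∀ p q (h : p ≤ q) β (hβ : Λ.s (a p) = Λ.r β), Λ.comp (a p) β hβ = a q →
      β = b p q h := fun p q h β hβ e =>
    (Λ.factor_unique _ _ _ _ hβ (hb p q h) rfl (e.trans (hab p q h).symm)).2
  have hd_b : ∀ p q (h : p ≤ q), Λ.d (b p q h) = fun i => q i - p i := fun p q h => by
    have e := congrArg Λ.d (hab p q h)
    rw [Λ.d_comp, hd, hd] at e
    funext i
    have := congrFun e i
    simp only [Pi.add_apply] at this
    omega
  have hcomp_b : ∀ p q m (h₁ : p ≤ q) (h₂ : q ≤ m) (hsq : Λ.s (b p q h₁) = Λ.r (b q m h₂)),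
      Λ.comp (b p q h₁) (b q m h₂) hsq = b p m (h₁.trans h₂) := fun p q m h₁ h₂ hsq =>
    hcancel p m _ _ _ <| calc
      Λ.comp (a p) (Λ.comp (b p q h₁) (b q m h₂) hsq) _
        = Λ.comp (Λ.comp (a p) (b p q h₁) (hb p q h₁)) (b q m h₂) _ :=
          (Λ.comp_assoc _ _ _ _ _).symm
      _ = Λ.comp (a q) (b q m h₂) (hb q m h₂) := Λ.comp_congr_left (hab p q h₁) _ _
      _ = a m := hab q m h₂
  refine ⟨⟨b, hd_b, fun p q m h₁ h₂ => (hs p q h₁).trans (hb q m h₂),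
    fun p q m h₁ h₂ => hcomp_b p q m h₁ h₂ _⟩, fun q => ?_⟩
  obtain ⟨v, hv⟩ := Λ.eq_ofObj_of_d_eq_zero (a 0) (hd 0)
  have hr : Λ.r (a q) = v := by rw [← hab 0 q (le0 q), Λ.r_comp, hv, Λ.r_ofObj]
  have h0 : a 0 = Λ.ofObj (Λ.r (a q)) := hv.trans (by rw [hr])
  exact (hcancel 0 q _ (a q) (by rw [h0, Λ.s_ofObj])
    ((Λ.comp_congr_left h0 _ (Λ.s_ofObj _)).trans (Λ.ofObj_comp _ _))).symm

lemma InfPath.exists_of_isPrefix_monotone (f : NK k → Λ.Mor)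
    (hf : ∀ p q, p ≤ q → Λ.IsPrefix (f p) (f q)) (hd : ∀ q, q ≤ Λ.d (f q)) :
    ∃ x : InfPath Λ, ∀ q, Λ.IsPrefix (x.seg 0 q (le0 q)) (f q) := by
  choose a ha hpre using fun q => Λ.exists_isPrefix_d_eq (hd q)
  have hmono : ∀ p q, p ≤ q → Λ.IsPrefix (a p) (a q) := by
    intro p q h
    obtain ⟨α, hα, hαq⟩ := Λ.exists_isPrefix_d_eq (p := p) (by rw [ha q]; exact h)
    have : α = a p :=
      (hαq.trans (hpre q)).eq_of_d_eq ((hpre p).trans (hf p q h)) (hα.trans (ha p).symm)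
    exact this ▸ hαq
  obtain ⟨x, hx⟩ := InfPath.exists_seg_zero_eq a ha hmono
  exact ⟨x, fun q => hx q ▸ hpre q⟩

noncomputable def KGraph.diagonalChain (Λ : KGraph k) (v : Λ.Obj) : ℕ → Λ.Mor
  | 0 => Λ.ofObj v
  | n + 1 => Λ.comp (Λ.diagonalChain v n) (Λ.no_sources (Λ.s (Λ.diagonalChain v n)) 1).choose
      (Λ.no_sources _ 1).choose_spec.1.symm

lemma KGraph.d_diagonalChain (Λ : KGraph k) (v : Λ.Obj) (n : ℕ) :
    Λ.d (Λ.diagonalChain v n) = fun _ => n := by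
  induction n with
  | zero => exact Λ.d_ofObj v
  | succ n ih =>
    rw [diagonalChain, Λ.d_comp, ih, (Λ.no_sources _ 1).choose_spec.2]
    rfl

lemma KGraph.isPrefix_diagonalChain (Λ : KGraph k) (v : Λ.Obj) {m n : ℕ} (h : m ≤ n) :
    Λ.IsPrefix (Λ.diagonalChain v m) (Λ.diagonalChain v n) := by
  induction n, h using Nat.le_induction with
  | base => exact Λ.isPrefix_refl _
  | succ n _ ih => exact ih.trans (Λ.isPrefix_comp _ _ _)

lemma InfPath.exists_seg_zero_zero_eq_ofObj (Λ : KGraph k) (v : Λ.Obj) :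
    ∃ x : InfPath Λ, x.seg 0 0 le_rfl = Λ.ofObj v := by
  obtain ⟨x, hx⟩ := InfPath.exists_of_isPrefix_monotone
    (fun q => Λ.diagonalChain v (Finset.univ.sup q))
    (fun p q h => Λ.isPrefix_diagonalChain v (Finset.sup_mono_fun fun i _ => h i))
    (fun q i => by rw [Λ.d_diagonalChain]; exact Finset.le_sup (Finset.mem_univ i))
  exact ⟨x, (hx 0).eq_of_d_eq (Λ.isPrefix_diagonalChain v (Nat.zero_le _))
    ((x.d_seg_zero 0).trans (Λ.d_ofObj v).symm)⟩

lemma InfPath.exists_isConcat (μ : Λ.Mor) (y : InfPath Λ)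
    (hy : y.seg 0 0 le_rfl = Λ.ofObj (Λ.s μ)) : ∃ z : InfPath Λ, IsConcat Λ μ y z := by
  have hr : ∀ q, Λ.s μ = Λ.r (y.seg 0 q (le0 q)) := fun q => by
    rw [← y.src_seg 0 0 q le_rfl (le0 q), hy, Λ.s_ofObj]
  set f : NK k → Λ.Mor := fun q => Λ.comp μ (y.seg 0 q (le0 q)) (hr q)
  have hf : ∀ p q, p ≤ q → Λ.IsPrefix (f p) (f q) := fun p q h =>
    (y.isPrefix_seg_zero h).comp_left _ _
  have hdf : ∀ q, Λ.d (f q) = Λ.d μ + q := fun q => by rw [Λ.d_comp, y.d_seg_zero]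
  obtain ⟨z, hz⟩ := InfPath.exists_of_isPrefix_monotone f hf
    (fun q => (hdf q).symm ▸ le_add_self)
  have hzf : ∀ n, z.seg 0 (Λ.d μ + n) (le0 _) = f n := fun n =>
    (hz _).eq_of_d_eq (hf n _ le_add_self) ((z.d_seg_zero _).trans (hdf n).symm)
  refine ⟨z, hy, (hz _).eq_of_d_eq (Λ.isPrefix_comp _ _ _) (z.d_seg_zero _),
    fun m n h => z.seg_eq_of_seg_zero_eq_comp _ (by rw [Λ.s_comp]; exact y.src_seg 0 m n _ h)
      (hzf m) ((hzf n).trans ?_)⟩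
  exact (Λ.comp_congr (y.comp_seg 0 m n _ h).symm _ _).trans (Λ.comp_assoc _ _ _ _ _).symm

lemma InfPath.mem_cylinder_seg_zero (x : InfPath Λ) (q : NK k) :
    x ∈ cylinder Λ (x.seg 0 q (le0 q)) :=
  x.seg_congr rfl (x.d_seg_zero q) _ _

lemma InfPath.mem_cylinder_ofObj_iff (x : InfPath Λ) (v : Λ.Obj) :
    x ∈ cylinder Λ (Λ.ofObj v) ↔ x.seg 0 0 le_rfl = Λ.ofObj v := by
  rw [cylinder, Set.mem_ofPred_eq, x.seg_congr rfl (Λ.d_ofObj v) _ le_rfl]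

lemma cylinder_seg_zero_subset {x : InfPath Λ} {μ : Λ.Mor} (hx : x ∈ cylinder Λ μ)
    {q : NK k} (hq : Λ.d μ ≤ q) : cylinder Λ (x.seg 0 q (le0 q)) ⊆ cylinder Λ μ := by
  intro y hy
  have hyq : y.seg 0 q (le0 q) = x.seg 0 q (le0 q) :=
    (y.seg_congr rfl (x.d_seg_zero q).symm _ _).trans hy
  exact ((y.isPrefix_seg_zero hq).eq_of_d_eq (hyq ▸ x.isPrefix_seg_zero hq)
    ((y.d_seg_zero _).trans (x.d_seg_zero _).symm)).trans hx

lemma isTopologicalBasis_cylinder (Λ : KGraph k) :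
    TopologicalSpace.IsTopologicalBasis {U | ∃ μ : Λ.Mor, U = cylinder Λ μ} where
  exists_subset_inter := by
    rintro _ ⟨μ, rfl⟩ _ ⟨ν, rfl⟩ x ⟨hμ, hν⟩
    exact ⟨_, ⟨x.seg 0 (Λ.d μ ⊔ Λ.d ν) (le0 _), rfl⟩, x.mem_cylinder_seg_zero _,
      fun y hy => ⟨cylinder_seg_zero_subset hμ le_sup_left hy,
        cylinder_seg_zero_subset hν le_sup_right hy⟩⟩
  sUnion_eq := Set.eq_univ_of_forall fun x =>
    ⟨_, ⟨x.seg 0 0 (le0 0), rfl⟩, x.mem_cylinder_seg_zero 0⟩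
  eq_generateFrom := rfl

lemma InfPath.shift_shift (x : InfPath Λ) (p m : NK k) :
    (x.shift p).shift m = x.shift (m + p) :=
  InfPath.ext' <| funext fun a => funext fun b => funext fun _ =>
    x.seg_congr (add_assoc a m p) (add_assoc b m p) _ _

lemma IsConcat.shift_d_add {μ : Λ.Mor} {y z : InfPath Λ} (hc : IsConcat Λ μ y z) (p : NK k) :
    z.shift (Λ.d μ + p) = y.shift p :=
  InfPath.ext' <| funext fun m => funext fun n => funext fun h =>
    (z.seg_congr (add_left_comm m _ p) (add_left_comm n _ p) _ _).trans
      (hc.2.2 (m + p) (n + p) (add_le_add_left h p))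

lemma SelfSimilar.res_seg_zero_zero (S : SelfSimilar k G Λ) (g : G) (x : InfPath Λ) :
    S.res g (x.seg 0 0 (le0 0)) = g := by
  obtain ⟨v, hv⟩ := Λ.eq_ofObj_of_d_eq_zero _ (x.d_seg_zero 0)
  rw [hv, S.res_ofObj]

lemma SelfSimilar.actInf_seg_zero (S : SelfSimilar k G Λ) (g : G) (x : InfPath Λ) (n : NK k) :
    (S.actInf g x).seg 0 n (le0 n) = S.act g (x.seg 0 n (le0 n)) :=
  congrArg (S.act · _) (S.res_seg_zero_zero g x)

lemma SelfSimilar.shift_actInf (S : SelfSimilar k G Λ) (g : G) (x : InfPath Λ) (m : NK k) :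
    (S.actInf g x).shift m = S.actInf (S.res g (x.seg 0 m (le0 m))) (x.shift m) := by
  refine InfPath.ext' <| funext fun a => funext fun b => funext fun h => congrArg (S.act · _) ?_
  show S.res g (x.seg 0 (a + m) (le0 _))
    = S.res (S.res g (x.seg 0 m (le0 m))) (x.seg (0 + m) (a + m) (add_le_add_left (le0 a) m))
  rw [x.seg_congr (zero_add m) rfl _ le_add_self, ← S.res_comp _ _ _ (x.src_seg _ _ _ _ _),
    x.comp_seg]

def SelfSimilar.IsAperiodicPath (S : SelfSimilar k G Λ) (x : InfPath Λ) : Prop :=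
  ∀ (g : G) (p q : NK k), x.shift p = S.actInf g (x.shift q) → g = 1 ∧ p = q

lemma gAperiodic_iff (S : SelfSimilar k G Λ) :
    GAperiodic S ↔ ∀ v : Λ.Obj, ∃ x : InfPath Λ,
      x.seg 0 0 le_rfl = Λ.ofObj v ∧ S.IsAperiodicPath x := by
  simp only [GAperiodic, SelfSimilar.IsAperiodicPath, ← not_and_or, not_imp_not]

lemma SelfSimilar.PseudoFree.eq_one_of_actInf_eq {S : SelfSimilar k G Λ} (hpf : S.PseudoFree)
    {g : G} {x : InfPath Λ} (n : NK k) (hx : S.actInf g x = x)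
    (hres : S.res g (x.seg 0 n (le0 n)) = 1) : g = 1 :=
  hpf g _ (by rw [← S.actInf_seg_zero, hx]) hres

lemma IsConcat.isAperiodicPath {S : SelfSimilar k G Λ} (hpf : S.PseudoFree) {μ : Λ.Mor}
    {y z : InfPath Λ} (hc : IsConcat Λ μ y z) (hy : S.IsAperiodicPath y) :
    S.IsAperiodicPath z := by
  intro g p q hpq
  have hy_pq : y.shift p = S.actInf (S.res g ((z.shift q).seg 0 (Λ.d μ) (le0 _))) (y.shift q) := by
    rw [← hc.shift_d_add p, ← hc.shift_d_add q, ← z.shift_shift p, hpq, S.shift_actInf,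
      z.shift_shift]
  obtain ⟨hres, rfl⟩ := hy _ p q hy_pq
  exact ⟨hpf.eq_one_of_actInf_eq (Λ.d μ) hpq.symm hres, rfl⟩

theorem stmt16_general {k : ℕ} (G : Type) [Group G]
    (Λ : KGraph k) (S : SelfSimilar k G Λ) (hpf : S.PseudoFree) :
    Dense {x : InfPath Λ | ∀ (g : G) (p q : NK k),
        x.shift p = S.actInf g (x.shift q) → g = 1 ∧ p = q} ↔
      GAperiodic S := by
  change Dense {x | S.IsAperiodicPath x} ↔ _
  rw [(isTopologicalBasis_cylinder Λ).dense_iff, gAperiodic_iff]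
  constructor
  · intro hdense v
    obtain ⟨x, hx⟩ := InfPath.exists_seg_zero_zero_eq_ofObj Λ v
    obtain ⟨z, hzv, hz⟩ :=
      hdense _ ⟨Λ.ofObj v, rfl⟩ ⟨x, (x.mem_cylinder_ofObj_iff v).2 hx⟩
    exact ⟨z, (z.mem_cylinder_ofObj_iff v).1 hzv, hz⟩
  · rintro hap _ ⟨μ, rfl⟩ -
    obtain ⟨y, hy0, hy⟩ := hap (Λ.s μ)
    obtain ⟨z, hz⟩ := InfPath.exists_isConcat μ y hy0
    exact ⟨z, hz.2.1, hz.isAperiodicPath hpf hy⟩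

/-- for a pseudo free action, the set of infinite paths with trivial
"isotropy" is dense in `Λ^∞` iff `Λ` is `G`-aperiodic (topological principality of the
self-similar path groupoid). -/
theorem stmt16 {k : ℕ} (hk : 0 < k) (G : Type) [Group G] [Countable G]
    (Λ : KGraph k) (S : SelfSimilar k G Λ) (hpf : S.PseudoFree) :
    Dense {x : InfPath Λ | ∀ (g : G) (p q : NK k),
        x.shift p = S.actInf g (x.shift q) → g = 1 ∧ p = q} ↔
      GAperiodic S :=
  stmt16_general G Λ S hpf

end SSKG
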